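/- arXiv:2502.08979 — 3 statements merged into one kernel-verified Lean document; each statement's English description precedes it below -/
import Mathlib

section
/- Let a = (a₁,a₂,a₃) ∈ (ℝ³)³ satisfy Φ(a) = ⟨a₁, a₂ × a₃⟩ ≠ 0, and define V₀(a) = (a₂×a₃, a₃×a₁, a₁×a₂), V₁(a) = (0, a₂×a₁, a₃×a₁), V₂(a) = (a₁×a₂, 0, a₃×a₂), V₃(a) = (a₁×a₃, a₂×a₃, 0). Then the four vectors V₀(a), V₁(a), V₂(a), V₃(a) are linearly independent in (ℝ³)³, and they span the kernel of the derivative at a of the map f(a₁,a₂,a₃) = (⟨a₁,a₂⟩, ⟨a₂,a₃⟩, ⟨a₃,a₁⟩, ‖a₁‖²−‖a₂‖², ‖a₂‖²−‖a₃‖²). -/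
open scoped RealInnerProductSpace

noncomputable section

/-- `ℝ³` with the standard (Euclidean) inner product. -/
abbrev E3 : Type := EuclideanSpace ℝ (Fin 3)

/-- The cross product on `ℝ³`. -/
def cross (u v : E3) : E3 :=
  (WithLp.equiv 2 (Fin 3 → ℝ)).symm
    (crossProduct ((WithLp.equiv 2 (Fin 3 → ℝ)) u) ((WithLp.equiv 2 (Fin 3 → ℝ)) v))

/-- `Φ(a₁,a₂,a₃) = ⟨a₁, a₂ × a₃⟩`. -/
def Phi (a : E3 × E3 × E3) : ℝ := ⟪a.1, cross a.2.1 a.2.2⟫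

/-- The five Casimir functions collected into a map `(ℝ³)³ → ℝ⁵`. -/
def casimir (a : E3 × E3 × E3) : Fin 5 → ℝ :=
  ![⟪a.1, a.2.1⟫, ⟪a.2.1, a.2.2⟫, ⟪a.2.2, a.1⟫,
    ‖a.1‖ ^ 2 - ‖a.2.1‖ ^ 2, ‖a.2.1‖ ^ 2 - ‖a.2.2‖ ^ 2]

/-- The vector field `V₀(a) = (a₂×a₃, a₃×a₁, a₁×a₂)`. -/
def V0 (a : E3 × E3 × E3) : E3 × E3 × E3 :=
  (cross a.2.1 a.2.2, cross a.2.2 a.1, cross a.1 a.2.1)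

/-- The vector field `V₁(a) = (0, a₂×a₁, a₃×a₁)`. -/
def V1 (a : E3 × E3 × E3) : E3 × E3 × E3 :=
  (0, cross a.2.1 a.1, cross a.2.2 a.1)

/-- The vector field `V₂(a) = (a₁×a₂, 0, a₃×a₂)`. -/
def V2 (a : E3 × E3 × E3) : E3 × E3 × E3 :=
  (cross a.1 a.2.1, 0, cross a.2.2 a.2.1)

/-- The vector field `V₃(a) = (a₁×a₃, a₂×a₃, 0)`. -/
def V3 (a : E3 × E3 × E3) : E3 × E3 × E3 :=
  (cross a.1 a.2.2, cross a.2.1 a.2.2, 0)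

/- ### Auxiliary lemmas -/

lemma cross_l1 (u v : E3) : ⟪cross u v, u⟫ = 0 := by
  simp [cross, PiLp.inner_apply, Fin.sum_univ_three, crossProduct]; ring
lemma cross_l2 (u v : E3) : ⟪cross u v, v⟫ = 0 := by
  simp [cross, PiLp.inner_apply, Fin.sum_univ_three, crossProduct]; ring
lemma cross_l3 (u v : E3) : ⟪u, cross u v⟫ = 0 := by
  simp [cross, PiLp.inner_apply, Fin.sum_univ_three, crossProduct]; ring
lemma cross_l4 (u v : E3) : ⟪v, cross u v⟫ = 0 := by
  simp [cross, PiLp.inner_apply, Fin.sum_univ_three, crossProduct]; ring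

section TripleProducts
variable (a : E3 × E3 × E3)

lemma tp1 : ⟪cross a.2.1 a.2.2, a.1⟫ = Phi a := by
  simp [Phi, cross, PiLp.inner_apply, Fin.sum_univ_three, crossProduct]; ring
lemma tp1' : ⟪a.1, cross a.2.1 a.2.2⟫ = Phi a := rfl
lemma tp2 : ⟪cross a.2.2 a.1, a.2.1⟫ = Phi a := by
  simp [Phi, cross, PiLp.inner_apply, Fin.sum_univ_three, crossProduct]; ring
lemma tp2' : ⟪a.2.1, cross a.2.2 a.1⟫ = Phi a := by
  simp [Phi, cross, PiLp.inner_apply, Fin.sum_univ_three, crossProduct]; ring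
lemma tp3 : ⟪cross a.1 a.2.1, a.2.2⟫ = Phi a := by
  simp [Phi, cross, PiLp.inner_apply, Fin.sum_univ_three, crossProduct]; ring
lemma tp3' : ⟪a.2.2, cross a.1 a.2.1⟫ = Phi a := by
  simp [Phi, cross, PiLp.inner_apply, Fin.sum_univ_three, crossProduct]; ring
lemma tn1 : ⟪cross a.1 a.2.2, a.2.1⟫ = -Phi a := by
  simp [Phi, cross, PiLp.inner_apply, Fin.sum_univ_three, crossProduct]; ring
lemma tn2 : ⟪cross a.2.1 a.1, a.2.2⟫ = -Phi a := by
  simp [Phi, cross, PiLp.inner_apply, Fin.sum_univ_three, crossProduct]; ring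
lemma tn3 : ⟪cross a.2.2 a.2.1, a.1⟫ = -Phi a := by
  simp [Phi, cross, PiLp.inner_apply, Fin.sum_univ_three, crossProduct]; ring

end TripleProducts

/-- The derivative of the Casimir map as an explicit continuous linear map. -/
def casimirDeriv (a : E3 × E3 × E3) : (E3 × E3 × E3) →L[ℝ] (Fin 5 → ℝ) :=
  ContinuousLinearMap.pi
    (letI F : (E3 × E3 × E3) →L[ℝ] E3 := ContinuousLinearMap.fst ℝ E3 (E3 × E3)
     letI G : (E3 × E3 × E3) →L[ℝ] E3 :=
       (ContinuousLinearMap.fst ℝ E3 E3).comp (ContinuousLinearMap.snd ℝ E3 (E3 × E3))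
     letI H : (E3 × E3 × E3) →L[ℝ] E3 :=
       (ContinuousLinearMap.snd ℝ E3 E3).comp (ContinuousLinearMap.snd ℝ E3 (E3 × E3))
     ![(fderivInnerCLM ℝ (a.1, a.2.1)).comp (F.prod G),
       (fderivInnerCLM ℝ (a.2.1, a.2.2)).comp (G.prod H),
       (fderivInnerCLM ℝ (a.2.2, a.1)).comp (H.prod F),
       (fderivInnerCLM ℝ (a.1, a.1)).comp (F.prod F) -
         (fderivInnerCLM ℝ (a.2.1, a.2.1)).comp (G.prod G),
       (fderivInnerCLM ℝ (a.2.1, a.2.1)).comp (G.prod G) -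
         (fderivInnerCLM ℝ (a.2.2, a.2.2)).comp (H.prod H)])

lemma casimirDeriv_hasFDerivAt (a : E3 × E3 × E3) :
    HasFDerivAt casimir (casimirDeriv a) a := by
  set F : (E3 × E3 × E3) →L[ℝ] E3 := ContinuousLinearMap.fst ℝ E3 (E3 × E3) with hF
  set G : (E3 × E3 × E3) →L[ℝ] E3 :=
    (ContinuousLinearMap.fst ℝ E3 E3).comp (ContinuousLinearMap.snd ℝ E3 (E3 × E3)) with hG
  set H : (E3 × E3 × E3) →L[ℝ] E3 :=
    (ContinuousLinearMap.snd ℝ E3 E3).comp (ContinuousLinearMap.snd ℝ E3 (E3 × E3)) with hH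
  have hf : HasFDerivAt (fun x : E3 × E3 × E3 => x.1) F a := hasFDerivAt_fst
  have hg : HasFDerivAt (fun x : E3 × E3 × E3 => x.2.1) G a := hasFDerivAt_snd.fst
  have hh : HasFDerivAt (fun x : E3 × E3 × E3 => x.2.2) H a := hasFDerivAt_snd.snd
  have hfun : casimir = fun x i =>
      (![fun x : E3 × E3 × E3 => ⟪x.1, x.2.1⟫, fun x => ⟪x.2.1, x.2.2⟫,
        fun x => ⟪x.2.2, x.1⟫, fun x => ⟪x.1, x.1⟫ - ⟪x.2.1, x.2.1⟫,
        fun x => ⟪x.2.1, x.2.1⟫ - ⟪x.2.2, x.2.2⟫] :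
          Fin 5 → (E3 × E3 × E3) → ℝ) i x := by
    funext x i
    fin_cases i <;> simp [casimir, real_inner_self_eq_norm_sq]
  rw [hfun]
  refine hasFDerivAt_pi.mpr ?_
  intro i
  fin_cases i <;>
    simp only [casimirDeriv, Matrix.cons_val_zero, Matrix.cons_val_one, Matrix.head_cons,
      Matrix.cons_val_two, Matrix.tail_cons, Matrix.cons_val_three, Matrix.cons_val_four]
  · exact hf.inner ℝ hg
  · exact hg.inner ℝ hh
  · exact hh.inner ℝ hf
  · exact (hf.inner ℝ hf).sub (hg.inner ℝ hg)
  · exact (hg.inner ℝ hg).sub (hh.inner ℝ hh)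

lemma casimirDeriv_apply (a v : E3 × E3 × E3) :
    casimirDeriv a v = ![⟪a.1, v.2.1⟫ + ⟪v.1, a.2.1⟫,
      ⟪a.2.1, v.2.2⟫ + ⟪v.2.1, a.2.2⟫,
      ⟪a.2.2, v.1⟫ + ⟪v.2.2, a.1⟫,
      (⟪a.1, v.1⟫ + ⟪v.1, a.1⟫) - (⟪a.2.1, v.2.1⟫ + ⟪v.2.1, a.2.1⟫),
      (⟪a.2.1, v.2.1⟫ + ⟪v.2.1, a.2.1⟫) - (⟪a.2.2, v.2.2⟫ + ⟪v.2.2, a.2.2⟫)] := by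
  funext i
  fin_cases i <;>
    simp [casimirDeriv, ContinuousLinearMap.pi_apply, fderivInnerCLM_apply]

lemma casimirDeriv_V0 (a : E3 × E3 × E3) : casimirDeriv a (V0 a) = 0 := by
  rw [casimirDeriv_apply]; funext i
  fin_cases i <;>
    · simp [V0, cross, PiLp.inner_apply, Fin.sum_univ_three, crossProduct]
      ring

lemma casimirDeriv_V1 (a : E3 × E3 × E3) : casimirDeriv a (V1 a) = 0 := by
  rw [casimirDeriv_apply]; funext i
  fin_cases i <;>
    · simp [V1, cross, PiLp.inner_apply, Fin.sum_univ_three, crossProduct]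
      ring

lemma casimirDeriv_V2 (a : E3 × E3 × E3) : casimirDeriv a (V2 a) = 0 := by
  rw [casimirDeriv_apply]; funext i
  fin_cases i <;>
    · simp [V2, cross, PiLp.inner_apply, Fin.sum_univ_three, crossProduct]
      ring

lemma casimirDeriv_V3 (a : E3 × E3 × E3) : casimirDeriv a (V3 a) = 0 := by
  rw [casimirDeriv_apply]; funext i
  fin_cases i <;>
    · simp [V3, cross, PiLp.inner_apply, Fin.sum_univ_three, crossProduct]
      ring

lemma casimirDeriv_surjective (a : E3 × E3 × E3) (ha : Phi a ≠ 0) :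
    Function.Surjective (casimirDeriv a) := by
  intro t
  refine ⟨(t 0 • ((Phi a)⁻¹ • cross a.2.2 a.1) + t 2 • ((Phi a)⁻¹ • cross a.1 a.2.1)
      + (t 3 / 2) • ((Phi a)⁻¹ • cross a.2.1 a.2.2),
    t 1 • ((Phi a)⁻¹ • cross a.1 a.2.1),
    (-(t 4) / 2) • ((Phi a)⁻¹ • cross a.1 a.2.1)), ?_⟩
  rw [casimirDeriv_apply]; funext i
  fin_cases i <;>
    simp only [Matrix.cons_val_zero, Matrix.cons_val_one, Matrix.head_cons,
      Matrix.cons_val_two, Matrix.tail_cons, Matrix.cons_val_three, Matrix.cons_val_four,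
      inner_add_left, inner_add_right, real_inner_smul_left,
      real_inner_smul_right, cross_l1, cross_l2, cross_l3, cross_l4,
      tp1, tp1', tp2, tp2', tp3, tp3', mul_zero, zero_mul, add_zero, zero_add,
      mul_neg, neg_zero, neg_neg] <;>
    field_simp <;> simp <;> ring

/-- At points with `Φ ≠ 0`, the vectors `V₀(a),…,V₃(a)` are linearly independent and span
the kernel of the derivative of the Casimir map. -/
theorem frame_linearIndependent_and_spans_ker (a : E3 × E3 × E3) (ha : Phi a ≠ 0) :
    LinearIndependent ℝ ![V0 a, V1 a, V2 a, V3 a] ∧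
    LinearMap.ker (fderiv ℝ casimir a).toLinearMap =
      Submodule.span ℝ {V0 a, V1 a, V2 a, V3 a} := by
  have hfd : fderiv ℝ casimir a = casimirDeriv a := (casimirDeriv_hasFDerivAt a).fderiv
  -- dimension count for the kernel
  have hker4 : Module.finrank ℝ (LinearMap.ker (casimirDeriv a).toLinearMap) = 4 := by
    have h1 := LinearMap.finrank_range_add_finrank_ker
      ((casimirDeriv a : (E3 × E3 × E3) →L[ℝ] (Fin 5 → ℝ)) : (E3 × E3 × E3) →ₗ[ℝ] (Fin 5 → ℝ))
    have hr : LinearMap.range ((casimirDeriv a : (E3 × E3 × E3) →L[ℝ] (Fin 5 → ℝ)) :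
        (E3 × E3 × E3) →ₗ[ℝ] (Fin 5 → ℝ)) = ⊤ :=
      LinearMap.range_eq_top.mpr (casimirDeriv_surjective a ha)
    rw [hr] at h1
    simp only [finrank_top] at h1
    have hk : LinearMap.ker ((casimirDeriv a : (E3 × E3 × E3) →L[ℝ] (Fin 5 → ℝ)) :
        (E3 × E3 × E3) →ₗ[ℝ] (Fin 5 → ℝ)) = LinearMap.ker (casimirDeriv a).toLinearMap := rfl
    rw [hk] at h1
    have h2 : Module.finrank ℝ (Fin 5 → ℝ) = 5 := by simp
    have h3 : Module.finrank ℝ (E3 × E3 × E3) = 9 := by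
      simp [Module.finrank_prod, finrank_euclideanSpace]
    omega
  -- linear independence
  have li : LinearIndependent ℝ ![V0 a, V1 a, V2 a, V3 a] := by
    rw [Fintype.linearIndependent_iff]
    intro g hg
    simp only [Fin.sum_univ_four, Matrix.cons_val_zero, Matrix.cons_val_one, Matrix.head_cons,
      Matrix.cons_val_two, Matrix.tail_cons, Matrix.cons_val_three, V0, V1, V2, V3] at hg
    have h1 := congrArg Prod.fst hg
    have h2 := congrArg (fun p : E3 × E3 × E3 => p.2.1) hg
    simp only [Prod.fst_add, Prod.smul_fst, Prod.snd_add, Prod.smul_snd, Prod.fst_zero,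
      Prod.snd_zero, smul_zero] at h1 h2
    have e0 : g 0 * Phi a = 0 := by
      have := congrArg (fun w : E3 => ⟪w, a.1⟫) h1
      simpa only [inner_add_left, inner_zero_left, real_inner_smul_left, cross_l1, cross_l2,
        tp1 a, mul_zero, add_zero, zero_add] using this
    have e2 : g 2 * Phi a = 0 := by
      have := congrArg (fun w : E3 => ⟪w, a.2.2⟫) h1
      simpa only [inner_add_left, inner_zero_left, real_inner_smul_left, cross_l1, cross_l2,
        tp3 a, mul_zero, add_zero, zero_add] using this
    have e3 : g 3 * Phi a = 0 := by
      have := congrArg (fun w : E3 => ⟪w, a.2.1⟫) h1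
      simpa only [inner_add_left, inner_zero_left, real_inner_smul_left, cross_l1, cross_l2,
        tn1 a, mul_zero, add_zero, zero_add, mul_neg, neg_eq_zero] using this
    have e1 : g 1 * Phi a = 0 := by
      have := congrArg (fun w : E3 => ⟪w, a.2.2⟫) h2
      simpa only [inner_add_left, inner_zero_left, real_inner_smul_left, cross_l1, cross_l2,
        tn2 a, mul_zero, add_zero, zero_add, mul_neg, neg_eq_zero] using this
    intro i
    fin_cases i
    · exact (mul_eq_zero.mp e0).resolve_right ha
    · exact (mul_eq_zero.mp e1).resolve_right ha
    · exact (mul_eq_zero.mp e2).resolve_right ha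
    · exact (mul_eq_zero.mp e3).resolve_right ha
  -- rank of the span
  have hsetrange : Set.range ![V0 a, V1 a, V2 a, V3 a] = {V0 a, V1 a, V2 a, V3 a} := by
    ext x
    simp only [Matrix.range_cons, Matrix.range_empty, Set.union_empty, Set.mem_insert_iff,
      Set.mem_singleton_iff, Set.singleton_union, Set.mem_union, Set.mem_empty_iff_false,
      or_false]
  have hspanrank :
      Module.finrank ℝ (Submodule.span ℝ ({V0 a, V1 a, V2 a, V3 a} : Set (E3 × E3 × E3))) = 4 := by
    rw [← hsetrange]
    simpa using finrank_span_eq_card li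
  have hle : Submodule.span ℝ ({V0 a, V1 a, V2 a, V3 a} : Set (E3 × E3 × E3)) ≤
      LinearMap.ker (casimirDeriv a).toLinearMap := by
    rw [Submodule.span_le]
    intro x hx
    simp only [Set.mem_insert_iff, Set.mem_singleton_iff] at hx
    rcases hx with rfl | rfl | rfl | rfl <;>
      simp [SetLike.mem_coe, LinearMap.mem_ker, casimirDeriv_V0, casimirDeriv_V1,
        casimirDeriv_V2, casimirDeriv_V3]
  refine ⟨li, ?_⟩
  rw [hfd]
  exact (Submodule.eq_of_le_of_finrank_le hle (by rw [hker4, hspanrank])).symm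

end
end

section
/- Define the smooth vector fields on (ℝ³)³: V₀(a) = (a₂×a₃, a₃×a₁, a₁×a₂), V₁(a) = (0, a₂×a₁, a₃×a₁), V₂(a) = (a₁×a₂, 0, a₃×a₂), V₃(a) = (a₁×a₃, a₂×a₃, 0), and for V, W let [V,W](a) = DW_a(V(a)) − DV_a(W(a)) denote their Lie bracket. Then at every point a = (a₁,a₂,a₃) with ⟨aᵢ,aⱼ⟩ = 0 for i ≠ j and Φ(a) = ⟨a₁, a₂ × a₃⟩ < 0, writing X = ‖a₁‖², Y = ‖a₂‖², Z = ‖a₃‖², one has: [V₀,V₁](a) = (YZ/Φ(a))·V₁(a), [V₀,V₂](a) = (XZ/Φ(a))·V₂(a), [V₀,V₃](a) = (XY/Φ(a))·V₃(a), [V₁,V₂](a) = −(XY/Φ(a))·V₃(a), [V₁,V₃](a) = (XZ/Φ(a))·V₂(a), and [V₂,V₃](a) = −(YZ/Φ(a))·V₁(a). -/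
open scoped RealInnerProductSpace

noncomputable section

/-- The Lie bracket of vector fields on the normed space `(ℝ³)³`:
`[V,W](a) = DW_a(V(a)) − DV_a(W(a))`. -/
def lieBr (V W : E3 × E3 × E3 → E3 × E3 × E3) (a : E3 × E3 × E3) : E3 × E3 × E3 :=
  fderiv ℝ W a (V a) - fderiv ℝ V a (W a)

/-! ### Auxiliary material -/

lemma crossE_apply (u v : E3) (i : Fin 3) :
    cross u v i = ![u 1 * v 2 - u 2 * v 1, u 2 * v 0 - u 0 * v 2, u 0 * v 1 - u 1 * v 0] i := by
  fin_cases i <;> simp [cross, crossProduct]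

lemma triple (u v w : E3) :
    cross u (cross v w) = ⟪u,w⟫ • v - ⟪u,v⟫ • w := by
  ext i
  fin_cases i <;>
    simp [crossE_apply, PiLp.inner_apply, Fin.sum_univ_three,
      RCLike.inner_apply, starRingEnd_apply] <;> ring

lemma triple' (u v w : E3) :
    cross (cross v w) u = ⟪u,v⟫ • w - ⟪u,w⟫ • v := by
  ext i
  fin_cases i <;>
    simp [crossE_apply, PiLp.inner_apply, Fin.sum_univ_three,
      RCLike.inner_apply, starRingEnd_apply] <;> ring

lemma cyc (u v w : E3) : ⟪u, cross v w⟫ = ⟪w, cross u v⟫ := by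
  simp [crossE_apply, PiLp.inner_apply, Fin.sum_univ_three,
    RCLike.inner_apply, starRingEnd_apply]
  ring

lemma cross_anti (u v : E3) : cross u v = - cross v u := by
  ext i; fin_cases i <;> simp [crossE_apply] <;> ring

@[simp] lemma cross_zero_right (u : E3) : cross u 0 = 0 := by
  ext i; fin_cases i <;> simp [crossE_apply]

@[simp] lemma cross_zero_left (u : E3) : cross 0 u = 0 := by
  ext i; fin_cases i <;> simp [crossE_apply]

def crossLB : E3 →ₗ[ℝ] E3 →ₗ[ℝ] E3 :=
  LinearMap.mk₂ ℝ cross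
    (fun u u' v => by ext i; fin_cases i <;> simp [crossE_apply] <;> ring)
    (fun c u v => by ext i; fin_cases i <;> simp [crossE_apply] <;> ring)
    (fun u v v' => by ext i; fin_cases i <;> simp [crossE_apply] <;> ring)
    (fun c u v => by ext i; fin_cases i <;> simp [crossE_apply] <;> ring)

def crossL : E3 →L[ℝ] E3 →L[ℝ] E3 :=
  LinearMap.toContinuousLinearMap
    ((LinearMap.toContinuousLinearMap :
      (E3 →ₗ[ℝ] E3) ≃ₗ[ℝ] (E3 →L[ℝ] E3)).toLinearMap ∘ₗ crossLB)

@[simp] lemma crossL_apply (u v : E3) : crossL u v = cross u v := rfl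

abbrev P3 := E3 × E3 × E3

def p1 : P3 →L[ℝ] E3 := ContinuousLinearMap.fst ℝ E3 (E3 × E3)
def p2 : P3 →L[ℝ] E3 :=
  (ContinuousLinearMap.fst ℝ E3 E3).comp (ContinuousLinearMap.snd ℝ E3 (E3 × E3))
def p3 : P3 →L[ℝ] E3 :=
  (ContinuousLinearMap.snd ℝ E3 E3).comp (ContinuousLinearMap.snd ℝ E3 (E3 × E3))

def dcross (f g : P3 →L[ℝ] E3) (a : P3) : P3 →L[ℝ] E3 :=
  (crossL.precompR P3 (f a)) g + (crossL.precompL P3) f (g a)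

lemma hasFDerivAt_cross (f g : P3 →L[ℝ] E3) (a : P3) :
    HasFDerivAt (fun x => cross (f x) (g x)) (dcross f g a) a :=
  crossL.hasFDerivAt_of_bilinear (f.hasFDerivAt) (g.hasFDerivAt)

@[simp] lemma dcross_apply (f g : P3 →L[ℝ] E3) (a v : P3) :
    dcross f g a v = cross (f a) (g v) + cross (f v) (g a) := by
  simp [dcross, ContinuousLinearMap.precompR, ContinuousLinearMap.precompL]

lemma fderiv_V0 (a v : P3) :
    fderiv ℝ V0 a v =
      (cross a.2.1 v.2.2 + cross v.2.1 a.2.2,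
       cross a.2.2 v.1 + cross v.2.2 a.1,
       cross a.1 v.2.1 + cross v.1 a.2.1) := by
  have h : HasFDerivAt V0
      ((dcross p2 p3 a).prod ((dcross p3 p1 a).prod (dcross p1 p2 a))) a :=
    HasFDerivAt.prodMk (hasFDerivAt_cross p2 p3 a)
      (HasFDerivAt.prodMk (hasFDerivAt_cross p3 p1 a) (hasFDerivAt_cross p1 p2 a))
  rw [h.fderiv]; simp [p1, p2, p3]

lemma fderiv_V1 (a v : P3) :
    fderiv ℝ V1 a v =
      (0,
       cross a.2.1 v.1 + cross v.2.1 a.1,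
       cross a.2.2 v.1 + cross v.2.2 a.1) := by
  have h : HasFDerivAt V1
      ((0 : P3 →L[ℝ] E3).prod ((dcross p2 p1 a).prod (dcross p3 p1 a))) a :=
    HasFDerivAt.prodMk (hasFDerivAt_const (0 : E3) a)
      (HasFDerivAt.prodMk (hasFDerivAt_cross p2 p1 a) (hasFDerivAt_cross p3 p1 a))
  rw [h.fderiv]; simp [p1, p2, p3]

lemma fderiv_V2 (a v : P3) :
    fderiv ℝ V2 a v =
      (cross a.1 v.2.1 + cross v.1 a.2.1,
       0,
       cross a.2.2 v.2.1 + cross v.2.2 a.2.1) := by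
  have h : HasFDerivAt V2
      ((dcross p1 p2 a).prod (((0 : P3 →L[ℝ] E3)).prod (dcross p3 p2 a))) a :=
    HasFDerivAt.prodMk (hasFDerivAt_cross p1 p2 a)
      (HasFDerivAt.prodMk (hasFDerivAt_const (0 : E3) a) (hasFDerivAt_cross p3 p2 a))
  rw [h.fderiv]; simp [p1, p2, p3]

lemma fderiv_V3 (a v : P3) :
    fderiv ℝ V3 a v =
      (cross a.1 v.2.2 + cross v.1 a.2.2,
       cross a.2.1 v.2.2 + cross v.2.1 a.2.2,
       0) := by
  have h : HasFDerivAt V3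
      ((dcross p1 p3 a).prod ((dcross p2 p3 a).prod (0 : P3 →L[ℝ] E3))) a :=
    HasFDerivAt.prodMk (hasFDerivAt_cross p1 p3 a)
      (HasFDerivAt.prodMk (hasFDerivAt_cross p2 p3 a) (hasFDerivAt_const (0 : E3) a))
  rw [h.fderiv]; simp [p1, p2, p3]

section K

variable (a : P3)

lemma K1 (h12 : ⟪a.1, a.2.1⟫ = 0) (h31 : ⟪a.2.2, a.1⟫ = 0) :
    Phi a • a.1 = ‖a.1‖ ^ 2 • cross a.2.1 a.2.2 := by
  have h13 : ⟪a.1, a.2.2⟫ = 0 := by rw [real_inner_comm]; exact h31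
  have h0 : cross a.1 (cross a.2.1 a.2.2) = 0 := by
    rw [triple, h12, h13]; simp
  have h1 := triple a.1 a.1 (cross a.2.1 a.2.2)
  rw [h0, cross_zero_right, real_inner_self_eq_norm_sq] at h1
  have := sub_eq_zero.mp h1.symm
  rw [← this]; rfl

lemma K2 (h12 : ⟪a.1, a.2.1⟫ = 0) (h23 : ⟪a.2.1, a.2.2⟫ = 0) :
    Phi a • a.2.1 = ‖a.2.1‖ ^ 2 • cross a.2.2 a.1 := by
  have h21 : ⟪a.2.1, a.1⟫ = 0 := by rw [real_inner_comm]; exact h12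
  have h0 : cross a.2.1 (cross a.2.2 a.1) = 0 := by
    rw [triple, h21, h23]; simp
  have h1 := triple a.2.1 a.2.1 (cross a.2.2 a.1)
  rw [h0, cross_zero_right, real_inner_self_eq_norm_sq] at h1
  have h2 : ⟪a.2.1, cross a.2.2 a.1⟫ = Phi a := by
    rw [cyc]; rfl
  rw [h2] at h1
  exact sub_eq_zero.mp h1.symm

lemma K3 (h23 : ⟪a.2.1, a.2.2⟫ = 0) (h31 : ⟪a.2.2, a.1⟫ = 0) :
    Phi a • a.2.2 = ‖a.2.2‖ ^ 2 • cross a.1 a.2.1 := by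
  have h32 : ⟪a.2.2, a.2.1⟫ = 0 := by rw [real_inner_comm]; exact h23
  have h0 : cross a.2.2 (cross a.1 a.2.1) = 0 := by
    rw [triple, h31, h32]; simp
  have h1 := triple a.2.2 a.2.2 (cross a.1 a.2.1)
  rw [h0, cross_zero_right, real_inner_self_eq_norm_sq] at h1
  have h2 : ⟪a.2.2, cross a.1 a.2.1⟫ = Phi a := by
    rw [cyc, cyc]; rfl
  rw [h2] at h1
  exact sub_eq_zero.mp h1.symm

end K

lemma scale_cancel {c d : ℝ} (hc : c ≠ 0) {x y : P3} (h : c • x = d • y) :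
    x = (d / c) • y := by
  calc x = c⁻¹ • (c • x) := by rw [smul_smul, inv_mul_cancel₀ hc, one_smul]
  _ = c⁻¹ • (d • y) := by rw [h]
  _ = (d / c) • y := by rw [smul_smul, div_eq_inv_mul]

section brackets

variable (a : P3)
  (h12 : ⟪a.1, a.2.1⟫ = 0) (h23 : ⟪a.2.1, a.2.2⟫ = 0) (h31 : ⟪a.2.2, a.1⟫ = 0)

-- All order-reversed hypotheses, packaged.
include h12 h23 h31

lemma e01 :
    Phi a • lieBr V0 V1 a = (‖a.2.1‖ ^ 2 * ‖a.2.2‖ ^ 2) • V1 a := by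
  have h21 : ⟪a.2.1, a.1⟫ = 0 := by rw [real_inner_comm]; exact h12
  have h32 : ⟪a.2.2, a.2.1⟫ = 0 := by rw [real_inner_comm]; exact h23
  have h13 : ⟪a.1, a.2.2⟫ = 0 := by rw [real_inner_comm]; exact h31
  have hK2 := K2 a h12 h23
  have hK3 := K3 a h23 h31
  have hL : lieBr V0 V1 a =
      (0, -(‖a.2.1‖ ^ 2 • a.2.2), ‖a.2.2‖ ^ 2 • a.2.1) := by
    simp only [lieBr, fderiv_V0, fderiv_V1, V0, V1]
    simp only [Prod.mk_sub_mk, Prod.mk.injEq]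
    refine ⟨?_, ?_, ?_⟩ <;>
      · simp only [triple, triple', h12, h23, h31, h21, h32, h13,
          real_inner_self_eq_norm_sq, cross_zero_right, cross_zero_left,
          zero_smul, smul_zero, add_zero, zero_add, sub_zero, zero_sub, neg_neg]
        try module
  rw [hL, V1]
  simp only [Prod.smul_mk, smul_zero, Prod.mk.injEq]
  refine ⟨trivial, ?_, ?_⟩
  · rw [cross_anti a.2.1 a.1]
    linear_combination (norm := module) (-(‖a.2.1‖ ^ 2) : ℝ) • hK3
  · linear_combination (norm := module) ((‖a.2.2‖ ^ 2) : ℝ) • hK2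

lemma e02 :
    Phi a • lieBr V0 V2 a = (‖a.1‖ ^ 2 * ‖a.2.2‖ ^ 2) • V2 a := by
  have h21 : ⟪a.2.1, a.1⟫ = 0 := by rw [real_inner_comm]; exact h12
  have h32 : ⟪a.2.2, a.2.1⟫ = 0 := by rw [real_inner_comm]; exact h23
  have h13 : ⟪a.1, a.2.2⟫ = 0 := by rw [real_inner_comm]; exact h31
  have hK1 := K1 a h12 h31
  have hK2 := K2 a h12 h23
  have hK3 := K3 a h23 h31
  have hL : lieBr V0 V2 a = (‖a.1‖ ^ 2 • a.2.2, 0, -(‖a.2.2‖ ^ 2 • a.1)) := by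
    simp only [lieBr, fderiv_V0, fderiv_V1, fderiv_V2, fderiv_V3, V0, V1, V2, V3]
    simp only [Prod.mk_sub_mk, Prod.mk.injEq]
    refine ⟨?_, ?_, ?_⟩ <;>
      · simp only [triple, triple', h12, h23, h31, h21, h32, h13,
          real_inner_self_eq_norm_sq, cross_zero_right, cross_zero_left,
          zero_smul, smul_zero, add_zero, zero_add, sub_zero, zero_sub, neg_neg]
        try module
  rw [hL, V2]
  simp only [Prod.smul_mk, smul_zero, Prod.mk.injEq]
  refine ⟨?_, trivial, ?_⟩
  · linear_combination (norm := module) ((‖a.1‖ ^ 2) : ℝ) • hK3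
  · rw [cross_anti a.2.2 a.2.1]
    linear_combination (norm := module) (-(‖a.2.2‖ ^ 2) : ℝ) • hK1

lemma e03 :
    Phi a • lieBr V0 V3 a = (‖a.1‖ ^ 2 * ‖a.2.1‖ ^ 2) • V3 a := by
  have h21 : ⟪a.2.1, a.1⟫ = 0 := by rw [real_inner_comm]; exact h12
  have h32 : ⟪a.2.2, a.2.1⟫ = 0 := by rw [real_inner_comm]; exact h23
  have h13 : ⟪a.1, a.2.2⟫ = 0 := by rw [real_inner_comm]; exact h31
  have hK1 := K1 a h12 h31
  have hK2 := K2 a h12 h23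
  have hK3 := K3 a h23 h31
  have hL : lieBr V0 V3 a = (-(‖a.1‖ ^ 2 • a.2.1), ‖a.2.1‖ ^ 2 • a.1, 0) := by
    simp only [lieBr, fderiv_V0, fderiv_V1, fderiv_V2, fderiv_V3, V0, V1, V2, V3]
    simp only [Prod.mk_sub_mk, Prod.mk.injEq]
    refine ⟨?_, ?_, ?_⟩ <;>
      · simp only [triple, triple', h12, h23, h31, h21, h32, h13,
          real_inner_self_eq_norm_sq, cross_zero_right, cross_zero_left,
          zero_smul, smul_zero, add_zero, zero_add, sub_zero, zero_sub, neg_neg]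
        try module
  rw [hL, V3]
  simp only [Prod.smul_mk, smul_zero, Prod.mk.injEq]
  refine ⟨?_, ?_, trivial⟩
  · rw [cross_anti a.1 a.2.2]
    linear_combination (norm := module) (-(‖a.1‖ ^ 2) : ℝ) • hK2
  · linear_combination (norm := module) ((‖a.2.1‖ ^ 2) : ℝ) • hK1

lemma e12 :
    Phi a • lieBr V1 V2 a = (-(‖a.1‖ ^ 2 * ‖a.2.1‖ ^ 2)) • V3 a := by
  have h21 : ⟪a.2.1, a.1⟫ = 0 := by rw [real_inner_comm]; exact h12
  have h32 : ⟪a.2.2, a.2.1⟫ = 0 := by rw [real_inner_comm]; exact h23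
  have h13 : ⟪a.1, a.2.2⟫ = 0 := by rw [real_inner_comm]; exact h31
  have hK1 := K1 a h12 h31
  have hK2 := K2 a h12 h23
  have hK3 := K3 a h23 h31
  have hL : lieBr V1 V2 a = (‖a.1‖ ^ 2 • a.2.1, -(‖a.2.1‖ ^ 2 • a.1), 0) := by
    simp only [lieBr, fderiv_V0, fderiv_V1, fderiv_V2, fderiv_V3, V0, V1, V2, V3]
    simp only [Prod.mk_sub_mk, Prod.mk.injEq]
    refine ⟨?_, ?_, ?_⟩ <;>
      · simp only [triple, triple', h12, h23, h31, h21, h32, h13,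
          real_inner_self_eq_norm_sq, cross_zero_right, cross_zero_left,
          zero_smul, smul_zero, add_zero, zero_add, sub_zero, zero_sub, neg_neg]
        try module
  rw [hL, V3]
  simp only [Prod.smul_mk, smul_zero, Prod.mk.injEq]
  refine ⟨?_, ?_, trivial⟩
  · rw [cross_anti a.1 a.2.2]
    linear_combination (norm := module) ((‖a.1‖ ^ 2) : ℝ) • hK2
  · linear_combination (norm := module) (-(‖a.2.1‖ ^ 2) : ℝ) • hK1

lemma e13 :
    Phi a • lieBr V1 V3 a = (‖a.1‖ ^ 2 * ‖a.2.2‖ ^ 2) • V2 a := by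
  have h21 : ⟪a.2.1, a.1⟫ = 0 := by rw [real_inner_comm]; exact h12
  have h32 : ⟪a.2.2, a.2.1⟫ = 0 := by rw [real_inner_comm]; exact h23
  have h13 : ⟪a.1, a.2.2⟫ = 0 := by rw [real_inner_comm]; exact h31
  have hK1 := K1 a h12 h31
  have hK2 := K2 a h12 h23
  have hK3 := K3 a h23 h31
  have hL : lieBr V1 V3 a = (‖a.1‖ ^ 2 • a.2.2, 0, -(‖a.2.2‖ ^ 2 • a.1)) := by
    simp only [lieBr, fderiv_V0, fderiv_V1, fderiv_V2, fderiv_V3, V0, V1, V2, V3]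
    simp only [Prod.mk_sub_mk, Prod.mk.injEq]
    refine ⟨?_, ?_, ?_⟩ <;>
      · simp only [triple, triple', h12, h23, h31, h21, h32, h13,
          real_inner_self_eq_norm_sq, cross_zero_right, cross_zero_left,
          zero_smul, smul_zero, add_zero, zero_add, sub_zero, zero_sub, neg_neg]
        try module
  rw [hL, V2]
  simp only [Prod.smul_mk, smul_zero, Prod.mk.injEq]
  refine ⟨?_, trivial, ?_⟩
  · linear_combination (norm := module) ((‖a.1‖ ^ 2) : ℝ) • hK3
  · rw [cross_anti a.2.2 a.2.1]
    linear_combination (norm := module) (-(‖a.2.2‖ ^ 2) : ℝ) • hK1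

lemma e23 :
    Phi a • lieBr V2 V3 a = (-(‖a.2.1‖ ^ 2 * ‖a.2.2‖ ^ 2)) • V1 a := by
  have h21 : ⟪a.2.1, a.1⟫ = 0 := by rw [real_inner_comm]; exact h12
  have h32 : ⟪a.2.2, a.2.1⟫ = 0 := by rw [real_inner_comm]; exact h23
  have h13 : ⟪a.1, a.2.2⟫ = 0 := by rw [real_inner_comm]; exact h31
  have hK1 := K1 a h12 h31
  have hK2 := K2 a h12 h23
  have hK3 := K3 a h23 h31
  have hL : lieBr V2 V3 a = (0, ‖a.2.1‖ ^ 2 • a.2.2, -(‖a.2.2‖ ^ 2 • a.2.1)) := by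
    simp only [lieBr, fderiv_V0, fderiv_V1, fderiv_V2, fderiv_V3, V0, V1, V2, V3]
    simp only [Prod.mk_sub_mk, Prod.mk.injEq]
    refine ⟨?_, ?_, ?_⟩ <;>
      · simp only [triple, triple', h12, h23, h31, h21, h32, h13,
          real_inner_self_eq_norm_sq, cross_zero_right, cross_zero_left,
          zero_smul, smul_zero, add_zero, zero_add, sub_zero, zero_sub, neg_neg]
        try module
  rw [hL, V1]
  simp only [Prod.smul_mk, smul_zero, Prod.mk.injEq]
  refine ⟨trivial, ?_, ?_⟩
  · rw [cross_anti a.2.1 a.1]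
    linear_combination (norm := module) ((‖a.2.1‖ ^ 2) : ℝ) • hK3
  · linear_combination (norm := module) (-(‖a.2.2‖ ^ 2) : ℝ) • hK2

end brackets

/-- The Lie brackets of the frame fields `V₀,…,V₃` at points of a leaf (pairwise
orthogonal components, `Φ < 0`), in terms of `X = ‖a₁‖²`, `Y = ‖a₂‖²`, `Z = ‖a₃‖²`. -/
theorem lieBracket_frame (a : E3 × E3 × E3)
    (h12 : ⟪a.1, a.2.1⟫ = 0) (h23 : ⟪a.2.1, a.2.2⟫ = 0) (h31 : ⟪a.2.2, a.1⟫ = 0)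
    (hΦ : Phi a < 0) :
    lieBr V0 V1 a = ((‖a.2.1‖ ^ 2 * ‖a.2.2‖ ^ 2) / Phi a) • V1 a ∧
    lieBr V0 V2 a = ((‖a.1‖ ^ 2 * ‖a.2.2‖ ^ 2) / Phi a) • V2 a ∧
    lieBr V0 V3 a = ((‖a.1‖ ^ 2 * ‖a.2.1‖ ^ 2) / Phi a) • V3 a ∧
    lieBr V1 V2 a = (-((‖a.1‖ ^ 2 * ‖a.2.1‖ ^ 2) / Phi a)) • V3 a ∧
    lieBr V1 V3 a = ((‖a.1‖ ^ 2 * ‖a.2.2‖ ^ 2) / Phi a) • V2 a ∧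
    lieBr V2 V3 a = (-((‖a.2.1‖ ^ 2 * ‖a.2.2‖ ^ 2) / Phi a)) • V1 a := by
  have hP : Phi a ≠ 0 := ne_of_lt hΦ
  refine ⟨scale_cancel hP (e01 a h12 h23 h31),
          scale_cancel hP (e02 a h12 h23 h31),
          scale_cancel hP (e03 a h12 h23 h31), ?_, 
          scale_cancel hP (e13 a h12 h23 h31), ?_⟩
  · have := scale_cancel hP (e12 a h12 h23 h31); rwa [neg_div] at this
  · have := scale_cancel hP (e23 a h12 h23 h31); rwa [neg_div] at this

end
end

section
/- The map (a₁,a₂,a₃) ↦ a₁ + i·a₂ ∈ ℂ³ is a homeomorphism from N_{0,0} = {(a₁,a₂,a₃) ∈ (ℝ³)³ : ⟨aᵢ,aⱼ⟩ = 0 for i ≠ j, ‖a₁‖ = ‖a₂‖ = ‖a₃‖, ⟨a₁, a₂ × a₃⟩ < 0} onto the complex nilpotent cone minus the origin, {v ∈ ℂ³ : v₁² + v₂² + v₃² = 0, v ≠ 0}. -/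
open scoped RealInnerProductSpace

noncomputable section

/-- The type-0 leaf `N_{0,0}`. -/
def N00 : Set (E3 × E3 × E3) :=
  {a | ⟪a.1, a.2.1⟫ = 0 ∧ ⟪a.2.1, a.2.2⟫ = 0 ∧ ⟪a.2.2, a.1⟫ = 0 ∧
    ‖a.1‖ = ‖a.2.1‖ ∧ ‖a.2.1‖ = ‖a.2.2‖ ∧ Phi a < 0}

/-- The nilpotent cone of `𝔰𝔩(2,ℂ) ≅ ℂ³` minus the origin. -/
def nilCone : Set (Fin 3 → ℂ) :=
  {v | v 0 ^ 2 + v 1 ^ 2 + v 2 ^ 2 = 0 ∧ v ≠ 0}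

/-- The projection `pr₁₂(a₁,a₂,a₃) = a₁ + i·a₂ ∈ ℂ³`. -/
def pr12 (a : E3 × E3 × E3) : Fin 3 → ℂ :=
  fun j => (a.1 j : ℂ) + Complex.I * (a.2.1 j : ℂ)

lemma crossc0 (u v : E3) : cross u v 0 = u 1 * v 2 - u 2 * v 1 := rfl
lemma crossc1 (u v : E3) : cross u v 1 = u 2 * v 0 - u 0 * v 2 := rfl
lemma crossc2 (u v : E3) : cross u v 2 = u 0 * v 1 - u 1 * v 0 := rfl

lemma inner3 (u v : E3) : ⟪u, v⟫ = u 0 * v 0 + u 1 * v 1 + u 2 * v 2 := by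
  simp [PiLp.inner_apply, RCLike.inner_apply, Fin.sum_univ_three]; ring

lemma norm_sq3 (u : E3) : ‖u‖ ^ 2 = u 0 ^ 2 + u 1 ^ 2 + u 2 ^ 2 := by
  rw [← real_inner_self_eq_norm_sq]
  rw [inner3]; ring

lemma smulc (r : ℝ) (u : E3) (j : Fin 3) : (r • u) j = r * u j := rfl

lemma norm_eq_of_sq_eq {x y : E3} (h : ‖x‖ ^ 2 = ‖y‖ ^ 2) : ‖x‖ = ‖y‖ := by
  have := congrArg Real.sqrt h
  rwa [Real.sqrt_sq (norm_nonneg _), Real.sqrt_sq (norm_nonneg _)] at this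

/-- key uniqueness of third vector -/
lemma a3_eq {a b c : E3} (H12 : ⟪a, b⟫ = 0) (H23 : ⟪b, c⟫ = 0) (H31 : ⟪c, a⟫ = 0)
    (hn1 : ‖a‖ = ‖b‖) (hn2 : ‖b‖ = ‖c‖) (hPhi : ⟪a, cross b c⟫ < 0) :
    c = (-(‖a‖)⁻¹) • cross a b := by
  set n := ‖a‖ with hn
  have hn0 : 0 < n := by
    rcases lt_or_eq_of_le (norm_nonneg a) with h | h
    · exact h
    · exfalso
      have ha : a = 0 := by rwa [eq_comm, norm_eq_zero] at h
      rw [ha, inner_zero_left] at hPhi; exact lt_irrefl 0 hPhi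
  have S1 : a 0 ^ 2 + a 1 ^ 2 + a 2 ^ 2 = n ^ 2 := (norm_sq3 a).symm
  have S2 : b 0 ^ 2 + b 1 ^ 2 + b 2 ^ 2 = n ^ 2 := by
    rw [← norm_sq3 b, ← hn1]
  have S3 : c 0 ^ 2 + c 1 ^ 2 + c 2 ^ 2 = n ^ 2 := by
    rw [← norm_sq3 c, ← hn2, ← hn1]
  rw [inner3] at H12 H23 H31
  rw [inner3, crossc0, crossc1, crossc2] at hPhi
  set φ : ℝ := a 0 * (b 1 * c 2 - b 2 * c 1) + a 1 * (b 2 * c 0 - b 0 * c 2) +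
      a 2 * (b 0 * c 1 - b 1 * c 0) with hφ
  have hPhi' : φ < 0 := by rw [hφ]; linarith [hPhi]
  have hsq : φ ^ 2 = (n ^ 3) ^ 2 := by
    rw [hφ]
    linear_combination ((b 0 ^ 2 + b 1 ^ 2 + b 2 ^ 2) * (c 0 ^ 2 + c 1 ^ 2 + c 2 ^ 2)) * S1 +
      (n ^ 2 * (c 0 ^ 2 + c 1 ^ 2 + c 2 ^ 2)) * S2 + (n ^ 4) * S3 +
      (2 * (b 0 * c 0 + b 1 * c 1 + b 2 * c 2) * (c 0 * a 0 + c 1 * a 1 + c 2 * a 2) -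
        (c 0 ^ 2 + c 1 ^ 2 + c 2 ^ 2) * (a 0 * b 0 + a 1 * b 1 + a 2 * b 2)) * H12 +
      (-(a 0 ^ 2 + a 1 ^ 2 + a 2 ^ 2) * (b 0 * c 0 + b 1 * c 1 + b 2 * c 2)) * H23 +
      (-(b 0 ^ 2 + b 1 ^ 2 + b 2 ^ 2) * (c 0 * a 0 + c 1 * a 1 + c 2 * a 2)) * H31
  have hval : φ = -n ^ 3 := by
    have h3 : (φ - n ^ 3) * (φ + n ^ 3) = 0 := by linear_combination hsq
    rcases mul_eq_zero.1 h3 with h | h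
    · exfalso; nlinarith
    · linarith
  have hne : n ^ 4 ≠ 0 := pow_ne_zero _ (ne_of_gt hn0)
  have key : ∀ w cj : ℝ, n ^ 4 * cj = φ * w → cj = -(n⁻¹) * w := by
    intro w cj h
    apply mul_left_cancel₀ hne
    rw [h, hval]
    field_simp
  have e0 : c 0 = -(n⁻¹) * (a 1 * b 2 - a 2 * b 1) := by
    apply key
    rw [hφ]
    linear_combination ((a 0 ^ 2 + a 1 ^ 2 + a 2 ^ 2) * b 0 - (a 0 * b 0 + a 1 * b 1 + a 2 * b 2) * a 0) * H23 +
      ((b 0 ^ 2 + b 1 ^ 2 + b 2 ^ 2) * a 0 - (a 0 * b 0 + a 1 * b 1 + a 2 * b 2) * b 0) * H31 +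
      (-(n ^ 2 * c 0)) * S2 + (-((b 0 ^ 2 + b 1 ^ 2 + b 2 ^ 2) * c 0)) * S1 +
      ((a 0 * b 0 + a 1 * b 1 + a 2 * b 2) * c 0) * H12
  have e1 : c 1 = -(n⁻¹) * (a 2 * b 0 - a 0 * b 2) := by
    apply key
    rw [hφ]
    linear_combination ((a 0 ^ 2 + a 1 ^ 2 + a 2 ^ 2) * b 1 - (a 0 * b 0 + a 1 * b 1 + a 2 * b 2) * a 1) * H23 +
      ((b 0 ^ 2 + b 1 ^ 2 + b 2 ^ 2) * a 1 - (a 0 * b 0 + a 1 * b 1 + a 2 * b 2) * b 1) * H31 +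
      (-(n ^ 2 * c 1)) * S2 + (-((b 0 ^ 2 + b 1 ^ 2 + b 2 ^ 2) * c 1)) * S1 +
      ((a 0 * b 0 + a 1 * b 1 + a 2 * b 2) * c 1) * H12
  have e2 : c 2 = -(n⁻¹) * (a 0 * b 1 - a 1 * b 0) := by
    apply key
    rw [hφ]
    linear_combination ((a 0 ^ 2 + a 1 ^ 2 + a 2 ^ 2) * b 2 - (a 0 * b 0 + a 1 * b 1 + a 2 * b 2) * a 2) * H23 +
      ((b 0 ^ 2 + b 1 ^ 2 + b 2 ^ 2) * a 2 - (a 0 * b 0 + a 1 * b 1 + a 2 * b 2) * b 2) * H31 +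
      (-(n ^ 2 * c 2)) * S2 + (-((b 0 ^ 2 + b 1 ^ 2 + b 2 ^ 2) * c 2)) * S1 +
      ((a 0 * b 0 + a 1 * b 1 + a 2 * b 2) * c 2) * H12
  ext j
  fin_cases j
  · exact e0
  · exact e1
  · exact e2

/-- real part vector -/
def reV (v : Fin 3 → ℂ) : E3 := (WithLp.equiv 2 (Fin 3 → ℝ)).symm fun j => (v j).re
def imV (v : Fin 3 → ℂ) : E3 := (WithLp.equiv 2 (Fin 3 → ℝ)).symm fun j => (v j).im
def Ginv (v : Fin 3 → ℂ) : E3 × E3 × E3 :=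
  (reV v, imV v, (-(‖reV v‖)⁻¹) • cross (reV v) (imV v))

lemma reV_apply (v : Fin 3 → ℂ) (j : Fin 3) : reV v j = (v j).re := rfl
lemma imV_apply (v : Fin 3 → ℂ) (j : Fin 3) : imV v j = (v j).im := rfl

lemma nilCone_re_im {v : Fin 3 → ℂ} (hv : v ∈ nilCone) :
    ((reV v 0)^2 + (reV v 1)^2 + (reV v 2)^2 = (imV v 0)^2 + (imV v 1)^2 + (imV v 2)^2) ∧
    (reV v 0 * imV v 0 + reV v 1 * imV v 1 + reV v 2 * imV v 2 = 0) := by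
  have h := hv.1
  rw [Complex.ext_iff] at h
  obtain ⟨h1, h2⟩ := h
  simp only [pow_two, Complex.add_re, Complex.add_im, Complex.mul_re, Complex.mul_im,
    Complex.zero_re, Complex.zero_im] at h1 h2
  constructor
  · simp only [reV_apply, imV_apply]; nlinarith [h1]
  · simp only [reV_apply, imV_apply]; nlinarith [h2]

lemma reV_norm_pos {v : Fin 3 → ℂ} (hv : v ∈ nilCone) : 0 < ‖reV v‖ := by
  rcases lt_or_eq_of_le (norm_nonneg (reV v)) with h | h
  · exact h
  · exfalso
    have hx : reV v = 0 := by rwa [eq_comm, norm_eq_zero] at h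
    obtain ⟨hre, him⟩ := nilCone_re_im hv
    have hx0 : ∀ j, reV v j = 0 := fun j => by rw [hx]; rfl
    rw [hx0 0, hx0 1, hx0 2] at hre
    have hy0 : imV v 0 = 0 ∧ imV v 1 = 0 ∧ imV v 2 = 0 := by
      refine ⟨?_, ?_, ?_⟩ <;> nlinarith [hre, sq_nonneg (imV v 0), sq_nonneg (imV v 1), sq_nonneg (imV v 2)]
    apply hv.2
    funext j
    rw [Complex.ext_iff]
    constructor
    · have := hx0 j; rw [reV_apply] at this; simpa using this
    · fin_cases j
      · have := hy0.1; rw [imV_apply] at this; simpa using this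
      · have := hy0.2.1; rw [imV_apply] at this; simpa using this
      · have := hy0.2.2; rw [imV_apply] at this; simpa using this

lemma Ginv_mem_N00 {v : Fin 3 → ℂ} (hv : v ∈ nilCone) : Ginv v ∈ N00 := by
  obtain ⟨hre, him⟩ := nilCone_re_im hv
  have hn0 : 0 < ‖reV v‖ := reV_norm_pos hv
  set x := reV v
  set y := imV v
  set n := ‖x‖ with hn
  have hnne : n ≠ 0 := ne_of_gt hn0
  have Sx : x 0 ^ 2 + x 1 ^ 2 + x 2 ^ 2 = n ^ 2 := (norm_sq3 x).symm
  have Sy : y 0 ^ 2 + y 1 ^ 2 + y 2 ^ 2 = n ^ 2 := by rw [← hre]; exact (norm_sq3 x).symm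
  set z : E3 := (-(n)⁻¹) • cross x y with hz
  have hzj : ∀ j, z j = -(n⁻¹) * cross x y j := fun j => smulc _ _ j
  have hxy : ⟪x, y⟫ = 0 := by rw [inner3]; linarith [him]
  refine ⟨hxy, ?_, ?_, ?_, ?_, ?_⟩
  · -- ⟪y, z⟫ = 0
    show ⟪y, z⟫ = 0
    rw [inner3, hzj 0, hzj 1, hzj 2, crossc0, crossc1, crossc2]
    ring
  · show ⟪z, x⟫ = 0
    rw [inner3, hzj 0, hzj 1, hzj 2, crossc0, crossc1, crossc2]
    ring
  · show ‖x‖ = ‖y‖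
    apply norm_eq_of_sq_eq
    rw [norm_sq3, norm_sq3, hre]
  · show ‖y‖ = ‖z‖
    apply norm_eq_of_sq_eq
    rw [norm_sq3, norm_sq3, hzj 0, hzj 1, hzj 2, crossc0, crossc1, crossc2]
    have expand : (-(n⁻¹) * (x 1 * y 2 - x 2 * y 1))^2 + (-(n⁻¹) * (x 2 * y 0 - x 0 * y 2))^2 +
        (-(n⁻¹) * (x 0 * y 1 - x 1 * y 0))^2 = (n⁻¹)^2 *
        ((x 0 ^ 2 + x 1 ^ 2 + x 2 ^ 2) * (y 0 ^ 2 + y 1 ^ 2 + y 2 ^ 2) -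
         (x 0 * y 0 + x 1 * y 1 + x 2 * y 2)^2) := by ring
    rw [expand, Sx, Sy, him]
    field_simp
    ring
  · show Phi (Ginv v) < 0
    have : Phi (Ginv v) = ⟪x, cross y z⟫ := rfl
    rw [this, inner3, crossc0, crossc1, crossc2, hzj 0, hzj 1, hzj 2,
      crossc0, crossc1, crossc2]
    have expand : x 0 * (y 1 * (-(n⁻¹) * (x 0 * y 1 - x 1 * y 0)) - y 2 * (-(n⁻¹) * (x 2 * y 0 - x 0 * y 2))) +
        x 1 * (y 2 * (-(n⁻¹) * (x 1 * y 2 - x 2 * y 1)) - y 0 * (-(n⁻¹) * (x 0 * y 1 - x 1 * y 0))) +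
        x 2 * (y 0 * (-(n⁻¹) * (x 2 * y 0 - x 0 * y 2)) - y 1 * (-(n⁻¹) * (x 1 * y 2 - x 2 * y 1))) =
        -(n⁻¹) * ((x 0 ^ 2 + x 1 ^ 2 + x 2 ^ 2) * (y 0 ^ 2 + y 1 ^ 2 + y 2 ^ 2) -
          (x 0 * y 0 + x 1 * y 1 + x 2 * y 2)^2) := by ring
    rw [expand, Sx, Sy, him]
    have h4 : (0:ℝ) < n ^ 2 * n ^ 2 - 0 ^ 2 := by nlinarith [mul_pos (pow_pos hn0 2) (pow_pos hn0 2)]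
    have h5 : (0:ℝ) < n⁻¹ * (n ^ 2 * n ^ 2 - 0 ^ 2) := mul_pos (inv_pos.2 hn0) h4
    linarith

lemma pr12_mem_nilCone {a : E3 × E3 × E3} (ha : a ∈ N00) : pr12 a ∈ nilCone := by
  obtain ⟨h12, h23, h31, hn1, hn2, hPhi⟩ := ha
  constructor
  · have hsq : ‖a.1‖ ^ 2 = ‖a.2.1‖ ^ 2 := by rw [hn1]
    rw [norm_sq3, norm_sq3] at hsq
    rw [inner3] at h12
    simp only [pr12]
    rw [Complex.ext_iff]
    constructor
    · simp only [pow_two, Complex.add_re, Complex.add_im, Complex.mul_re, Complex.mul_im,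
        Complex.I_re, Complex.I_im, Complex.ofReal_re, Complex.ofReal_im, Complex.zero_re]
      ring_nf
      nlinarith [hsq]
    · simp only [pow_two, Complex.add_re, Complex.add_im, Complex.mul_re, Complex.mul_im,
        Complex.I_re, Complex.I_im, Complex.ofReal_re, Complex.ofReal_im, Complex.zero_im]
      ring_nf
      nlinarith [h12]
  · intro h0
    have ha1 : a.1 = 0 := by
      ext j
      have : pr12 a j = 0 := by rw [h0]; rfl
      have hre := congrArg Complex.re this
      simpa [pr12] using hre
    simp only [Phi] at hPhi
    rw [ha1, inner_zero_left] at hPhi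
    exact lt_irrefl 0 hPhi

lemma Ginv_pr12 {a : E3 × E3 × E3} (ha : a ∈ N00) : Ginv (pr12 a) = a := by
  obtain ⟨h12, h23, h31, hn1, hn2, hPhi⟩ := ha
  have hx : reV (pr12 a) = a.1 := by
    ext j
    simp [reV_apply, pr12]
  have hy : imV (pr12 a) = a.2.1 := by
    ext j
    simp [imV_apply, pr12]
  have hz : a.2.2 = (-(‖a.1‖)⁻¹) • cross a.1 a.2.1 :=
    a3_eq h12 h23 h31 hn1 hn2 hPhi
  show (reV (pr12 a), imV (pr12 a), (-(‖reV (pr12 a)‖)⁻¹) • cross (reV (pr12 a)) (imV (pr12 a))) = a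
  rw [hx, hy, ← hz]

lemma pr12_Ginv {v : Fin 3 → ℂ} (hv : v ∈ nilCone) : pr12 (Ginv v) = v := by
  funext j
  show (reV v j : ℂ) + Complex.I * (imV v j : ℂ) = v j
  rw [reV_apply, imV_apply, Complex.ext_iff]
  constructor <;> simp

lemma coord_cont (j : Fin 3) : Continuous fun u : E3 => u j :=
  (continuous_apply j).comp (PiLp.continuous_ofLp (p := 2) (β := fun _ : Fin 3 => ℝ))

lemma cont_pr12 : Continuous fun a : E3 × E3 × E3 => pr12 a := by
  apply continuous_pi
  intro j
  exact (Complex.continuous_ofReal.comp ((coord_cont j).comp continuous_fst)).add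
    (continuous_const.mul (Complex.continuous_ofReal.comp
      ((coord_cont j).comp (continuous_fst.comp continuous_snd))))

lemma cont_reV : Continuous fun v : Fin 3 → ℂ => reV v :=
  (PiLp.continuous_toLp (p := 2) (β := fun _ : Fin 3 => ℝ)).comp
    (continuous_pi fun j => Complex.continuous_re.comp (continuous_apply j))

lemma cont_imV : Continuous fun v : Fin 3 → ℂ => imV v :=
  (PiLp.continuous_toLp (p := 2) (β := fun _ : Fin 3 => ℝ)).comp
    (continuous_pi fun j => Complex.continuous_im.comp (continuous_apply j))

/-- `a ↦ a₁ + i·a₂` is a homeomorphism from the type-0 leaf `N_{0,0}` onto the complex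
nilpotent cone minus the origin. -/
theorem N00_homeomorph_nilCone :
    ∃ H : N00 ≃ₜ nilCone, ∀ a : N00, (H a : Fin 3 → ℂ) = pr12 (a : E3 × E3 × E3) := by
  have c1 : Continuous fun v : nilCone => reV v.1 := cont_reV.comp continuous_subtype_val
  have c2 : Continuous fun v : nilCone => imV v.1 := cont_imV.comp continuous_subtype_val
  have hc : Continuous fun v : nilCone => cross (reV v.1) (imV v.1) := by
    refine (PiLp.continuous_toLp (p := 2) (β := fun _ : Fin 3 => ℝ)).comp (continuous_pi ?_)
    intro j
    fin_cases j
    · show Continuous fun v : nilCone => reV v.1 1 * imV v.1 2 - reV v.1 2 * imV v.1 1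
      exact (((coord_cont 1).comp c1).mul ((coord_cont 2).comp c2)).sub
        (((coord_cont 2).comp c1).mul ((coord_cont 1).comp c2))
    · show Continuous fun v : nilCone => reV v.1 2 * imV v.1 0 - reV v.1 0 * imV v.1 2
      exact (((coord_cont 2).comp c1).mul ((coord_cont 0).comp c2)).sub
        (((coord_cont 0).comp c1).mul ((coord_cont 2).comp c2))
    · show Continuous fun v : nilCone => reV v.1 0 * imV v.1 1 - reV v.1 1 * imV v.1 0
      exact (((coord_cont 0).comp c1).mul ((coord_cont 1).comp c2)).sub
        (((coord_cont 1).comp c1).mul ((coord_cont 0).comp c2))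
  have hscal : Continuous fun v : nilCone => -(‖reV v.1‖)⁻¹ :=
    (c1.norm.inv₀ fun v => ne_of_gt (reV_norm_pos v.2)).neg
  have hG : Continuous fun v : nilCone => Ginv v.1 :=
    c1.prodMk (c2.prodMk (hscal.smul hc))
  refine ⟨⟨⟨fun a => ⟨pr12 a.1, pr12_mem_nilCone a.2⟩,
      fun v => ⟨Ginv v.1, Ginv_mem_N00 v.2⟩,
      fun a => Subtype.ext (Ginv_pr12 a.2),
      fun v => Subtype.ext (pr12_Ginv v.2)⟩,
      Continuous.subtype_mk (cont_pr12.comp continuous_subtype_val) _,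
      Continuous.subtype_mk hG _⟩, fun a => rfl⟩

end
end
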